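/- arXiv:math/0301108 — 4 statements merged into one kernel-verified Lean document; each statement's English description precedes it below -/
import Mathlib

section
/- Let (G ⇉ M, η, σ) be a contact groupoid, so that η_{gh}(X ⊕_{TG} Y) = η_g(X) + e^{σ(g)} η_h(Y) for all composable tangent vectors. Then σ is multiplicative: σ(gh) = σ(g) + σ(h) for all composable pairs (g, h) in G. -/
/-- A groupoid `G ⇉ M`: `src` is the projection `α`, `tgt` the projection `β`, `unit` the
inclusion of identities `ε`, `inv` the inversion and `mul` the partial multiplication
(implemented as a total map; the groupoid axioms are only required on composable pairs,
where `g` and `h` are composable when `α(g) = β(h)`, and then `α(gh) = α(h)`,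
`β(gh) = β(g)`). -/
structure GroupoidStr (G M : Type*) where
  src : G → M
  tgt : G → M
  unit : M → G
  inv : G → G
  mul : G → G → G
  src_unit : ∀ x, src (unit x) = x
  tgt_unit : ∀ x, tgt (unit x) = x
  src_mul : ∀ g h, src g = tgt h → src (mul g h) = src h
  tgt_mul : ∀ g h, src g = tgt h → tgt (mul g h) = tgt g
  mul_assoc' : ∀ g h k, src g = tgt h → src h = tgt k → mul (mul g h) k = mul g (mul h k)
  unit_mul : ∀ g, mul (unit (tgt g)) g = g
  mul_unit : ∀ g, mul g (unit (src g)) = g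
  src_inv : ∀ g, src (inv g) = tgt g
  tgt_inv : ∀ g, tgt (inv g) = src g
  mul_inv : ∀ g, mul g (inv g) = unit (tgt g)
  inv_mul : ∀ g, mul (inv g) g = unit (src g)

/-- let `(G ⇉ M, η, σ)` be a contact groupoid, i.e. the contact form `η`
(viewed as the fibrewise-linear function `η : TG → ℝ` on the tangent groupoid
`TG ⇉ TM`, with bundle projection `p : TG → G`) satisfies
`η(X ⊕_{TG} Y) = η(X) + e^{σ(p X)} η(Y)` on composable tangent vectors.
Then `σ` is multiplicative: `σ(gh) = σ(g) + σ(h)` for composable `(g,h)`.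

Here `Θ` is the tangent groupoid `TG ⇉ TM`, `p : TG → G` (resp. `p₀ : TM → M`) is the
canonical projection, which is a groupoid morphism onto `G ⇉ M`; the lifting hypotheses
express that `p` and the structural maps of `TG` are fibrewise surjective submersions and
that the contact form `η` is nowhere vanishing. -/
theorem contact_groupoid_sigma_multiplicative
    (G M TG TM : Type*) (Γ : GroupoidStr G M) (Θ : GroupoidStr TG TM)
    (p : TG → G) (p₀ : TM → M)
    (η : TG → ℝ) (σ : G → ℝ)
    -- `p` is a groupoid morphism over `p₀`
    (hp_src : ∀ X, p₀ (Θ.src X) = Γ.src (p X))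
    (hp_tgt : ∀ X, p₀ (Θ.tgt X) = Γ.tgt (p X))
    (hp_mul : ∀ X Y, Θ.src X = Θ.tgt Y → p (Θ.mul X Y) = Γ.mul (p X) (p Y))
    -- any composable pair in `G` lifts to a composable pair in `TG`
    (hlift : ∀ g h, Γ.src g = Γ.tgt h → ∃ X Y, p X = g ∧ p Y = h ∧ Θ.src X = Θ.tgt Y)
    -- any arrow composable after a given tangent vector admits a composable lift on
    -- which the (nowhere vanishing, fibrewise linear) contact form does not vanish
    (hlift' : ∀ (X : TG) (k : G), Γ.src (p X) = Γ.tgt k →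
      ∃ Z, p Z = k ∧ Θ.src X = Θ.tgt Z ∧ η Z ≠ 0)
    -- the contact groupoid condition (3) of the paper
    (hcontact : ∀ X Y, Θ.src X = Θ.tgt Y →
      η (Θ.mul X Y) = η X + Real.exp (σ (p X)) * η Y) :
    ∀ g h, Γ.src g = Γ.tgt h → σ (Γ.mul g h) = σ g + σ h := by
  intro g h hgh
  obtain ⟨X, Y, hX, hY, hXY⟩ := hlift g h hgh
  obtain ⟨Z, hZ, hYZ, hηZ⟩ := hlift' Y (Γ.unit (Γ.src h))
    (by rw [hY, Γ.tgt_unit])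
  have hXYZ : Θ.src (Θ.mul X Y) = Θ.tgt Z := by
    rw [Θ.src_mul X Y hXY, hYZ]
  have hpXY : p (Θ.mul X Y) = Γ.mul g h := by
    rw [hp_mul X Y hXY, hX, hY]
  have e1 := hcontact (Θ.mul X Y) Z hXYZ
  have e2 := hcontact X (Θ.mul Y Z) (by rw [Θ.tgt_mul Y Z hYZ, hXY])
  rw [Θ.mul_assoc' X Y Z hXY hYZ, e2, hcontact X Y hXY, hcontact Y Z hYZ,
    hpXY, hX, hY] at e1
  have key : Real.exp (σ (Γ.mul g h)) * η Z = Real.exp (σ g) * Real.exp (σ h) * η Z := by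
    have ha := mul_assoc (Real.exp (σ g)) (Real.exp (σ h)) (η Z)
    have hb := mul_add (Real.exp (σ g)) (η Y) (Real.exp (σ h) * η Z)
    linarith
  have hexp : Real.exp (σ (Γ.mul g h)) = Real.exp (σ g + σ h) := by
    rw [Real.exp_add]; exact mul_right_cancel₀ hηZ key
  exact Real.exp_injective hexp
end

section
/- Let G be a manifold with contact form η, let σ : G → ℝ be smooth, and on G × ℝ define Ω = −(π̄₁* dη + π̄₂*(dt) ∧ π̄₁* η) and ω = −π̄₂*(dt), where π̄₁ : G × ℝ → G and π̄₂ : G × ℝ → ℝ are the projections. Then ω is closed, Ω is non-degenerate, and dΩ = ω ∧ Ω, so (Ω, ω) is a locally conformal symplectic structure on G × ℝ. -/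
section

variable {E : Type*} [NormedAddCommGroup E] [NormedSpace ℝ E]

/-- The exterior derivative `(dη)_g(X,Y) = (Dη_g X)(Y) − (Dη_g Y)(X)` of a 1-form
`η : E → E →L[ℝ] ℝ` on (a chart of) a manifold `G` modelled on the normed space `E`. -/
noncomputable def dEta (η : E → (E →L[ℝ] ℝ)) (g : E) (X Y : E) : ℝ :=
  (fderiv ℝ η g X) Y - (fderiv ℝ η g Y) X

/-- The 2-form `Ω = −(π̄₁* dη + π̄₂*(dt) ∧ π̄₁* η)` on `G × ℝ`, evaluated at a point
`p ∈ G × ℝ` on tangent vectors `u = (X, λ)` and `v = (Y, μ)`: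
`Ω_p(u,v) = −( (dη)_{p₁}(X,Y) + λ η(Y) − μ η(X) )`. -/
noncomputable def lcsOmega (η : E → (E →L[ℝ] ℝ)) (p : E × ℝ) (u v : E × ℝ) : ℝ :=
  -(dEta η p.1 u.1 v.1 + u.2 * η p.1 v.1 - v.2 * η p.1 u.1)

/-- The Lee form `ω = −π̄₂*(dt)` on `G × ℝ`: `ω_p(X, λ) = −λ`. -/
def lcsLee (_p : E × ℝ) (u : E × ℝ) : ℝ := -u.2

/-- Derivative of `Ω(v,w)` as a function of the base point, in the direction `u`. -/
lemma lcsOmega_fderiv (η : E → (E →L[ℝ] ℝ)) (hη : ContDiff ℝ (⊤ : ℕ∞) η) (p : E × ℝ)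
    (u v w : E × ℝ) :
    fderiv ℝ (fun q => lcsOmega η q v w) p u
      = -((fderiv ℝ (fderiv ℝ η) p.1 u.1 v.1) w.1 - (fderiv ℝ (fderiv ℝ η) p.1 u.1 w.1) v.1
          + v.2 * (fderiv ℝ η p.1 u.1) w.1 - w.2 * (fderiv ℝ η p.1 u.1) v.1) := by
  have h1 : ContDiff ℝ (⊤ : ℕ∞) (fderiv ℝ η) := hη.fderiv_right (by simp)
  have hd1 : ∀ Y : E, HasFDerivAt (fun g => η g Y)
      ((ContinuousLinearMap.apply ℝ ℝ Y).comp (fderiv ℝ η p.1)) p.1 := fun Y =>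
    ((ContinuousLinearMap.apply ℝ ℝ Y).hasFDerivAt).comp p.1
      (hη.differentiable (by simp) p.1).hasFDerivAt
  have hd2 : ∀ Y Z : E, HasFDerivAt (fun g => (fderiv ℝ η g Y) Z)
      (((ContinuousLinearMap.apply ℝ ℝ Z).comp
        (ContinuousLinearMap.apply ℝ (E →L[ℝ] ℝ) Y)).comp (fderiv ℝ (fderiv ℝ η) p.1)) p.1 := by
    intro Y Z
    exact (((ContinuousLinearMap.apply ℝ ℝ Z).comp
        (ContinuousLinearMap.apply ℝ (E →L[ℝ] ℝ) Y)).hasFDerivAt).comp p.1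
      (h1.differentiable (by simp) p.1).hasFDerivAt
  have Hφ := ((((hd2 v.1 w.1).sub (hd2 w.1 v.1)).add
      ((hd1 w.1).const_mul v.2)).sub ((hd1 v.1).const_mul w.2)).neg
  have Hfull := Hφ.comp p (hasFDerivAt_fst (p := p))
  have heq : (fun q : E × ℝ => lcsOmega η q v w)
      = (fun g : E => -((fderiv ℝ η g v.1) w.1 - (fderiv ℝ η g w.1) v.1
          + v.2 * η g w.1 - w.2 * η g v.1)) ∘ Prod.fst := by
    funext q
    simp only [lcsOmega, dEta, Function.comp]
  rw [heq, HasFDerivAt.fderiv (f := (fun g : E => -((fderiv ℝ η g v.1) w.1 - (fderiv ℝ η g w.1) v.1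
          + v.2 * η g w.1 - w.2 * η g v.1)) ∘ Prod.fst) Hfull]
  simp

/-- if `η` is a contact form on `G` (modelled on a chart: `η` nowhere zero
with `dη` non-degenerate on `ker η` at each point) and
`Ω = −(π̄₁* dη + π̄₂*(dt) ∧ π̄₁* η)`, `ω = −π̄₂*(dt)` on `G × ℝ`, then `ω` is closed,
`Ω` is non-degenerate, and `dΩ = ω ∧ Ω`, so `(Ω, ω)` is a locally conformal symplectic
structure on `G × ℝ`.  (The exterior derivative is evaluated on constant vector fields
`u, v, w` on the model vector space.) -/
theorem lcs_structure_on_G_times_R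
    (η : E → (E →L[ℝ] ℝ)) (hη : ContDiff ℝ (⊤ : ℕ∞) η)
    -- `η` is a contact form: at every point `η ≠ 0` and `dη` is non-degenerate on `ker η`
    (hcontact : ∀ g : E, η g ≠ 0 ∧
      (∀ X : E, η g X = 0 → (∀ Y : E, η g Y = 0 → dEta η g X Y = 0) → X = 0)) :
    -- `ω` is closed
    (∀ (p : E × ℝ) (u v : E × ℝ),
      fderiv ℝ (fun q : E × ℝ => lcsLee q v) p u
        - fderiv ℝ (fun q : E × ℝ => lcsLee q u) p v = 0) ∧
    -- `Ω` is non-degenerate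
    (∀ (p : E × ℝ) (u : E × ℝ), (∀ v : E × ℝ, lcsOmega η p u v = 0) → u = 0) ∧
    -- `dΩ = ω ∧ Ω`
    (∀ (p : E × ℝ) (u v w : E × ℝ),
      fderiv ℝ (fun q => lcsOmega η q v w) p u
        - fderiv ℝ (fun q => lcsOmega η q u w) p v
        + fderiv ℝ (fun q => lcsOmega η q u v) p w
      = lcsLee p u * lcsOmega η p v w - lcsLee p v * lcsOmega η p u w
        + lcsLee p w * lcsOmega η p u v) := by
  refine ⟨?_, ?_, ?_⟩
  · intro p u v
    simp [lcsLee]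
  · intro p u hu
    -- first: η p.1 u.1 = 0, by testing against v = (0, 1)
    have hX : η p.1 u.1 = 0 := by
      have h := hu (0, 1)
      simp [lcsOmega, dEta] at h
      linarith [h]
    -- second: dη(u.1, Y) = 0 for Y ∈ ker η, by testing against v = (Y, 0)
    have hker : ∀ Y : E, η p.1 Y = 0 → dEta η p.1 u.1 Y = 0 := by
      intro Y hY
      have h := hu (Y, 0)
      simp [lcsOmega, hY, hX] at h
      exact h
    have hX0 : u.1 = 0 := (hcontact p.1).2 u.1 hX hker
    -- third: u.2 = 0, by testing against (Y, 0) with η Y ≠ 0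
    obtain ⟨Y, hY⟩ : ∃ Y : E, η p.1 Y ≠ 0 := by
      by_contra h
      push_neg at h
      exact (hcontact p.1).1 (ContinuousLinearMap.ext fun Y => by simpa using h Y)
    have h := hu (Y, 0)
    simp [lcsOmega, dEta, hX0] at h
    have hu2 : u.2 = 0 := by
      rcases h with h | h
      · exact h
      · exact absurd h hY
    exact Prod.ext hX0 hu2
  · intro p u v w
    rw [lcsOmega_fderiv η hη p u v w, lcsOmega_fderiv η hη p v u w,
      lcsOmega_fderiv η hη p w u v]
    have hsym : IsSymmSndFDerivAt ℝ η p.1 :=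
      (hη.contDiffAt).isSymmSndFDerivAt (by rw [minSmoothness_of_isRCLikeNormedField]; exact WithTop.coe_le_coe.mpr (le_top : (2 : ℕ∞) ≤ ⊤))
    have h1 : fderiv ℝ (fderiv ℝ η) p.1 v.1 u.1 = fderiv ℝ (fderiv ℝ η) p.1 u.1 v.1 :=
      hsym v.1 u.1
    have h2 : fderiv ℝ (fderiv ℝ η) p.1 w.1 u.1 = fderiv ℝ (fderiv ℝ η) p.1 u.1 w.1 :=
      hsym w.1 u.1
    have h3 : fderiv ℝ (fderiv ℝ η) p.1 w.1 v.1 = fderiv ℝ (fderiv ℝ η) p.1 v.1 w.1 :=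
      hsym w.1 v.1
    simp only [lcsLee, lcsOmega, dEta, h1, h2, h3]
    ring

end
end

section
/- Let G ⇉ M be a Lie groupoid with multiplicative function σ, and consider the σ-twisted structural maps on T*G: α̃*_σ(μ_g) = e^{−σ(g)} α̃(μ_g), β̃*_σ(ν_h) = β̃(ν_h), μ_g ⊕^σ ν_h = μ_g ⊕_{T*G} e^{σ(g)} ν_h, ε̃*_σ = ε̃. Then these maps define a groupoid structure on T*G over A*G (the σ-cotangent groupoid), given that (α̃, β̃, ⊕_{T*G}, ε̃) is the usual cotangent groupoid structure. -/
/-- let `G ⇉ M` be a Lie groupoid with multiplicative function `σ`, and let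
`T*G ⇉ A*G` be its cotangent groupoid (here: a groupoid `C` on a type `T` over `B`,
together with the bundle projections `π : T*G → G`, `q : A*G → M` and the fibrewise
scalar multiplications, satisfying the usual compatibilities — `π` is a groupoid morphism
and the structural maps of `C` are fibrewise linear).  Then the σ-twisted maps
`α̃*_σ(μ) = e^{−σ(g)} α̃(μ)`, `β̃*_σ = β̃`, `μ ⊕^σ ν = μ ⊕ e^{σ(g)} ν`, `ε̃*_σ = ε̃`
define a groupoid structure on `T*G` over `A*G` (the σ-cotangent groupoid). -/
theorem sigma_cotangent_groupoid
    (G M T B : Type*) (Γ : GroupoidStr G M) (C : GroupoidStr T B)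
    (π : T → G) (q : B → M)
    (smulT : ℝ → T → T) (smulB : ℝ → B → B)
    (σ : G → ℝ)
    (hσ : ∀ g h, Γ.src g = Γ.tgt h → σ (Γ.mul g h) = σ g + σ h)
    -- `π` is a groupoid morphism over `q` onto `G ⇉ M`
    (hπ_src : ∀ μ, q (C.src μ) = Γ.src (π μ))
    (hπ_tgt : ∀ μ, q (C.tgt μ) = Γ.tgt (π μ))
    (hπ_mul : ∀ μ ν, C.src μ = C.tgt ν → π (C.mul μ ν) = Γ.mul (π μ) (π ν))
    (hπ_unit : ∀ b, π (C.unit b) = Γ.unit (q b))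
    (hπ_inv : ∀ μ, π (C.inv μ) = Γ.inv (π μ))
    -- the fibrewise ℝ-actions
    (hπ_smul : ∀ c μ, π (smulT c μ) = π μ)
    (hq_smul : ∀ c b, q (smulB c b) = q b)
    (hsmulT_one : ∀ μ, smulT 1 μ = μ)
    (hsmulT_mul : ∀ c c' μ, smulT c (smulT c' μ) = smulT (c * c') μ)
    (hsmulB_one : ∀ b, smulB 1 b = b)
    (hsmulB_mul : ∀ c c' b, smulB c (smulB c' b) = smulB (c * c') b)
    -- the structural maps of the cotangent groupoid are fibrewise linear
    (hsrc_smul : ∀ c μ, C.src (smulT c μ) = smulB c (C.src μ))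
    (htgt_smul : ∀ c μ, C.tgt (smulT c μ) = smulB c (C.tgt μ))
    (hmul_smul : ∀ c μ ν, C.src μ = C.tgt ν →
      C.mul (smulT c μ) (smulT c ν) = smulT c (C.mul μ ν))
    (hunit_smul : ∀ c b, C.unit (smulB c b) = smulT c (C.unit b))
    (hinv_smul : ∀ c μ, C.inv (smulT c μ) = smulT c (C.inv μ)) :
    ∃ S : GroupoidStr T B,
      (∀ μ, S.src μ = smulB (Real.exp (-(σ (π μ)))) (C.src μ)) ∧
      (∀ μ, S.tgt μ = C.tgt μ) ∧
      (∀ μ ν, S.src μ = S.tgt ν →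
        S.mul μ ν = C.mul μ (smulT (Real.exp (σ (π μ))) ν)) ∧
      (∀ b, S.unit b = C.unit b) := by
  -- σ vanishes on units
  have hσ_unit : ∀ x : M, σ (Γ.unit x) = 0 := by
    intro x
    have hc : Γ.src (Γ.unit x) = Γ.tgt (Γ.unit x) := by
      rw [Γ.src_unit, Γ.tgt_unit]
    have hm : Γ.mul (Γ.unit x) (Γ.unit x) = Γ.unit x := by
      have := Γ.unit_mul (Γ.unit x)
      rwa [Γ.tgt_unit] at this
    have := hσ _ _ hc
    rw [hm] at this
    linarith
  -- σ of inverses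
  have hσ_inv : ∀ g : G, σ (Γ.inv g) = -σ g := by
    intro g
    have hc : Γ.src g = Γ.tgt (Γ.inv g) := (Γ.tgt_inv g).symm
    have := hσ _ _ hc
    rw [Γ.mul_inv, hσ_unit] at this
    linarith
  have hexp : ∀ a b : ℝ, Real.exp a * Real.exp b = Real.exp (a + b) := fun a b =>
    (Real.exp_add a b).symm
  -- composability transfer
  have hcomp : ∀ μ ν, smulB (Real.exp (-(σ (π μ)))) (C.src μ) = C.tgt ν →
      C.src μ = C.tgt (smulT (Real.exp (σ (π μ))) ν) := by
    intro μ ν h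
    rw [htgt_smul, ← h, hsmulB_mul, hexp, add_neg_cancel, Real.exp_zero, hsmulB_one]
  have hcompΓ : ∀ μ ν, smulB (Real.exp (-(σ (π μ)))) (C.src μ) = C.tgt ν →
      Γ.src (π μ) = Γ.tgt (π ν) := by
    intro μ ν h
    have := congrArg q (hcomp μ ν h)
    rwa [hπ_src, hπ_tgt, hπ_smul] at this
  refine ⟨{
    src := fun μ => smulB (Real.exp (-(σ (π μ)))) (C.src μ)
    tgt := C.tgt
    unit := C.unit
    inv := fun μ => smulT (Real.exp (-(σ (π μ)))) (C.inv μ)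
    mul := fun μ ν => C.mul μ (smulT (Real.exp (σ (π μ))) ν)
    src_unit := by
      intro b
      rw [C.src_unit, hπ_unit, hσ_unit, neg_zero, Real.exp_zero, hsmulB_one]
    tgt_unit := C.tgt_unit
    src_mul := by
      intro μ ν h
      have hc := hcomp μ ν h
      rw [hπ_mul _ _ hc, hπ_smul, C.src_mul _ _ hc, hsrc_smul, hsmulB_mul,
        hσ _ _ (hcompΓ μ ν h), hexp]
      congr 2
      ring
    tgt_mul := by
      intro μ ν h
      exact C.tgt_mul _ _ (hcomp μ ν h)
    mul_assoc' := by
      intro μ ν ρ h1 h2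
      have hc1 := hcomp μ ν h1
      have hc2 := hcomp ν ρ h2
      have hπm : π (C.mul μ (smulT (Real.exp (σ (π μ))) ν)) = Γ.mul (π μ) (π ν) := by
        rw [hπ_mul _ _ hc1, hπ_smul]
      rw [hπm, hσ _ _ (hcompΓ μ ν h1)]
      have hc2' : C.src (smulT (Real.exp (σ (π μ))) ν)
          = C.tgt (smulT (Real.exp (σ (π μ) + σ (π ν))) ρ) := by
        rw [hsrc_smul, hc2, htgt_smul, htgt_smul, hsmulB_mul, hexp]
      rw [← hmul_smul _ _ _ hc2, hsmulT_mul, hexp]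
      exact C.mul_assoc' _ _ _ hc1 hc2'
    unit_mul := by
      intro μ
      rw [hπ_unit, hπ_tgt, hσ_unit, Real.exp_zero, hsmulT_one]
      exact C.unit_mul μ
    mul_unit := by
      intro μ
      rw [hunit_smul, hsmulT_mul, hexp, add_neg_cancel, Real.exp_zero, hsmulT_one]
      exact C.mul_unit μ
    src_inv := by
      intro μ
      rw [hπ_smul, hπ_inv, hσ_inv, neg_neg, hsrc_smul, C.src_inv, hsmulB_mul, hexp,
        add_neg_cancel, Real.exp_zero, hsmulB_one]
    tgt_inv := by
      intro μ
      rw [htgt_smul, C.tgt_inv]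
    mul_inv := by
      intro μ
      rw [hsmulT_mul, hexp, add_neg_cancel, Real.exp_zero, hsmulT_one, C.mul_inv]
    inv_mul := by
      intro μ
      have hc : C.src (C.inv μ) = C.tgt μ := C.src_inv μ
      rw [hπ_smul, hπ_inv, hσ_inv]
      have hc' : C.src (C.inv μ) = C.tgt μ := hc
      calc C.mul (smulT (Real.exp (-σ (π μ))) (C.inv μ))
            (smulT (Real.exp (-σ (π μ))) μ)
          = smulT (Real.exp (-σ (π μ))) (C.mul (C.inv μ) μ) := hmul_smul _ _ _ hc
        _ = smulT (Real.exp (-σ (π μ))) (C.unit (C.src μ)) := by rw [C.inv_mul]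
        _ = C.unit (smulB (Real.exp (-σ (π μ))) (C.src μ)) := (hunit_smul _ _).symm
  }, fun _ => rfl, fun _ => rfl, fun _ _ _ => rfl, fun _ => rfl⟩
end

section
/- Let f : (M₁, Λ₁, E₁) → (M₂, Λ₂, E₂) be a conformal Jacobi morphism with conformal factor e^τ (τ : M₁ → ℝ), meaning that for each point p, #_{Λ₂} at f(p) equals e^{τ(p)} · (T_p f) ∘ #_{Λ₁} ∘ (T_p f)* and E₂(f(p)) = T_p f ( e^{τ(p)}( E₁ + #_{Λ₁}(dτ) )(p) ). If θ₂ is a 1-form on M₂ with f*θ₂ = e^{−τ}θ₁ and #_{Λ₁}(θ₁) = e^{τ}(E₁ + #_{Λ₁}dτ) (the Hamiltonian field of e^{τ}), then #_{Λ₂}(θ₂) = E₂. -/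
/-- stated pointwise, at a point `p`, with `V₁ = T_pM₁`, `V₂ = T_{f(p)}M₂`
and `Tf = T_pf`: let `f : (M₁,Λ₁,E₁) → (M₂,Λ₂,E₂)` be a conformal Jacobi morphism with
conformal factor `e^τ`, i.e. `#_{Λ₂} = e^τ · Tf ∘ #_{Λ₁} ∘ (Tf)*` at `f(p)` and
`E₂(f(p)) = Tf(e^τ(E₁ + #_{Λ₁}(dτ)))`.  If `θ₂` is a 1-form with `f*θ₂ = e^{−τ}θ₁` and
`#_{Λ₁}(θ₁) = e^τ(E₁ + #_{Λ₁}(dτ))` (the Hamiltonian vector field of `e^τ`), then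
`#_{Λ₂}(θ₂) = E₂`. -/
theorem conformal_jacobi_morphism_sharp_theta
    (V₁ V₂ : Type*) [AddCommGroup V₁] [Module ℝ V₁] [AddCommGroup V₂] [Module ℝ V₂]
    (Tf : V₁ →ₗ[ℝ] V₂)
    (sharpΛ₁ : (V₁ →ₗ[ℝ] ℝ) → V₁) (sharpΛ₂ : (V₂ →ₗ[ℝ] ℝ) → V₂)
    (E₁ : V₁) (E₂ : V₂) (τ : ℝ) (dτ θ₁ : V₁ →ₗ[ℝ] ℝ) (θ₂ : V₂ →ₗ[ℝ] ℝ)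
    -- `#_{Λ₁}` is homogeneous (it is induced by a bivector)
    (hhom : ∀ (c : ℝ) (μ : V₁ →ₗ[ℝ] ℝ), sharpΛ₁ (c • μ) = c • sharpΛ₁ μ)
    -- `f` is a conformal Jacobi morphism with conformal factor `e^τ`
    (hconf : ∀ β : V₂ →ₗ[ℝ] ℝ, sharpΛ₂ β = Real.exp τ • Tf (sharpΛ₁ (β.comp Tf)))
    (hE : E₂ = Tf (Real.exp τ • (E₁ + sharpΛ₁ dτ)))
    -- `f*θ₂ = e^{−τ} θ₁`
    (hθ : θ₂.comp Tf = Real.exp (-τ) • θ₁)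
    -- `#_{Λ₁}(θ₁)` is the Hamiltonian vector field of `e^τ`
    (hHam : sharpΛ₁ θ₁ = Real.exp τ • (E₁ + sharpΛ₁ dτ)) :
    sharpΛ₂ θ₂ = E₂ := by
  rw [hconf, hθ, hhom, map_smul, smul_smul, ← Real.exp_add]
  simp only [add_neg_cancel, Real.exp_zero, one_smul]
  rw [← hHam] at hE
  rw [hE, hHam]
end
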